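/- The function deg₂(d, ω) = |d| + |{x ∈ d \ [m] : ω(x) = x}| defines a filtration on the invariant algebra A^m_∞: for m-marked cycle shapes λ, δ, ρ with k_{λδ}^ρ ≠ 0, one has deg₂(ρ) ≤ deg₂(λ) + deg₂(δ), where deg₂ of a class is |ρ| + m₁(ρ). -/

import Mathlib

/-- An `m`-partial permutation (of ℕ): a finite domain `d` containing `[m] = {0,…,m-1}`
together with a permutation of `d`, encoded by its extension `σ` to `ℕ` which is the
identity outside `d`. -/
structure MPP (m : ℕ) where
  d : Finset ℕ
  σ : Equiv.Perm ℕ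
  range_sub : Finset.range m ⊆ d
  fix : ∀ x ∉ d, σ x = x

namespace MPP

variable {m : ℕ}

@[ext] theorem ext {p q : MPP m} (hd : p.d = q.d) (hσ : p.σ = q.σ) : p = q := by
  cases p; cases q; simp only [mk.injEq]; exact ⟨hd, hσ⟩

/-- The product of `m`-partial permutations: union of the domains, composition of the
extended permutations (restricted to the union). -/
instance : Monoid (MPP m) where
  mul p q := ⟨p.d ∪ q.d, p.σ * q.σ, p.range_sub.trans Finset.subset_union_left,
    fun x hx => by
      have hq : x ∉ q.d := fun h => hx (Finset.mem_union_right _ h)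
      have hp : x ∉ p.d := fun h => hx (Finset.mem_union_left _ h)
      simp [Equiv.Perm.mul_apply, q.fix x hq, p.fix x hp]⟩
  one := ⟨Finset.range m, 1, le_refl _, fun _ _ => rfl⟩
  mul_assoc p q r := ext (Finset.union_assoc _ _ _) (mul_assoc _ _ _)
  one_mul p := ext (Finset.union_eq_right.mpr p.range_sub) (one_mul _)
  mul_one p := ext (Finset.union_eq_left.mpr p.range_sub) (mul_one _)

@[simp] theorem mul_d (p q : MPP m) : (p * q).d = p.d ∪ q.d := rfl
@[simp] theorem mul_σ (p q : MPP m) : (p * q).σ = p.σ * q.σ := rfl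
@[simp] theorem one_d : (1 : MPP m).d = Finset.range m := rfl
@[simp] theorem one_σ : (1 : MPP m).σ = 1 := rfl

/-- Two `m`-partial permutations have the same `m`-marked cycle type iff there is a
relabelling of ℕ fixing `[m]` pointwise carrying one to the other. -/
def sameType (p q : MPP m) : Prop :=
  ∃ σ : Equiv.Perm ℕ, (∀ x < m, σ x = x) ∧ p.d.image σ = q.d ∧ σ * p.σ * σ⁻¹ = q.σ

/-- `m₁`: the number of trivial cycles `(∗)`, i.e. fixed points of the permutation lying
in the domain but outside `[m]`. -/
def m1 (p : MPP m) : ℕ := ((p.d \ Finset.range m).filter (fun x => p.σ x = x)).card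

/-- `p` padded with fixed points so that its domain becomes `[n]` (when `p.d ⊆ [n]`);
this realizes the shape `ρ̲ₙ`. -/
def padTo (n : ℕ) (p : MPP m) : MPP m :=
  ⟨p.d ∪ Finset.range n, p.σ, p.range_sub.trans Finset.subset_union_left,
   fun x hx => p.fix x fun h => hx (Finset.mem_union_left _ h)⟩

/-- `p` with `k` fresh fixed points adjoined to its domain; this realizes the shape `ρᵏ`. -/
def addFix (p : MPP m) (k : ℕ) : MPP m :=
  ⟨p.d ∪ (Finset.range (p.d.sup id + 1 + k) \ Finset.range (p.d.sup id + 1)), p.σ,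
   p.range_sub.trans Finset.subset_union_left,
   fun x hx => p.fix x fun h => hx (Finset.mem_union_left _ h)⟩

/-- A shape is proper when it has no cycle `(∗)`, i.e. no fixed point outside `[m]`. -/
def isProper (p : MPP m) : Prop := ∀ x ∈ p.d, m ≤ x → p.σ x ≠ x

/-- The subgroup `Stab_n(m)` of permutations of ℕ fixing `[m]` pointwise and fixing
everything outside `[n]` (i.e. `Stab_n(m) ≤ S_n`). -/
def StabN (m n : ℕ) : Subgroup (Equiv.Perm ℕ) where
  carrier := {σ | (∀ x < m, σ x = x) ∧ (∀ x, n ≤ x → σ x = x)}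
  one_mem' := ⟨fun _ _ => rfl, fun _ _ => rfl⟩
  mul_mem' := by
    rintro σ τ ⟨h1, h2⟩ ⟨h3, h4⟩
    exact ⟨fun x hx => by simp [Equiv.Perm.mul_apply, h3 x hx, h1 x hx],
           fun x hx => by simp [Equiv.Perm.mul_apply, h4 x hx, h2 x hx]⟩
  inv_mem' := by
    rintro σ ⟨h1, h2⟩
    refine ⟨fun x hx => ?_, fun x hx => ?_⟩
    · conv_lhs => rw [← h1 x hx]
      exact Equiv.symm_apply_apply σ x
    · conv_lhs => rw [← h2 x hx]
      exact Equiv.symm_apply_apply σ x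

/-- The conjugation action of `Stab_n(m)` on `m`-partial permutations:
`σ·(d,ω) = (σ(d), σ∘ω∘σ⁻¹)`. -/
def conjAct {n : ℕ} (σ : StabN m n) (p : MPP m) : MPP m :=
  ⟨p.d.image (σ : Equiv.Perm ℕ), (σ : Equiv.Perm ℕ) * p.σ * (σ : Equiv.Perm ℕ)⁻¹,
   fun x hx => Finset.mem_image.mpr
     ⟨x, p.range_sub hx, σ.2.1 x (Finset.mem_range.mp hx)⟩,
   fun x hx => by
     have h1 : (σ : Equiv.Perm ℕ)⁻¹ x ∉ p.d := fun h =>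
       hx (Finset.mem_image.mpr ⟨_, h, Equiv.apply_symm_apply (σ : Equiv.Perm ℕ) x⟩)
     simp only [Equiv.Perm.mul_apply, p.fix _ h1]
     exact Equiv.apply_symm_apply (σ : Equiv.Perm ℕ) x⟩

theorem sameType_d_card {p q : MPP m} (h : sameType p q) : p.d.card = q.d.card := by
  obtain ⟨σ, -, hd, -⟩ := h
  rw [← hd, Finset.card_image_of_injective _ σ.injective]

theorem sameType_m1 {p q : MPP m} (h : sameType p q) : p.m1 = q.m1 := by
  obtain ⟨σ, hfix, hd, hσ⟩ := h
  have hlt : ∀ x, σ x < m ↔ x < m := by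
    intro x
    constructor
    · intro hx
      have := hfix _ hx
      have : σ (σ x) = σ x := this
      have := σ.injective this
      omega
    · intro hx; rw [hfix x hx]; exact hx
  have key : ((p.d \ Finset.range m).filter (fun x => p.σ x = x)).image σ
      = (q.d \ Finset.range m).filter (fun x => q.σ x = x) := by
    ext y
    simp only [Finset.mem_image, Finset.mem_filter, Finset.mem_sdiff, Finset.mem_range]
    constructor
    · rintro ⟨x, ⟨⟨hxd, hxm⟩, hfx⟩, rfl⟩
      refine ⟨⟨?_, fun hc => hxm ((hlt x).mp hc)⟩, ?_⟩
      · rw [← hd]; exact Finset.mem_image_of_mem _ hxd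
      · rw [← hσ]; simp [Equiv.Perm.mul_apply, hfx]
    · rintro ⟨⟨hyd, hym⟩, hfy⟩
      rw [← hd] at hyd
      obtain ⟨x, hxd, rfl⟩ := Finset.mem_image.mp hyd
      refine ⟨x, ⟨⟨hxd, fun hc => hym ((hlt x).mpr hc)⟩, ?_⟩, rfl⟩
      rw [← hσ] at hfy
      simp only [Equiv.Perm.mul_apply] at hfy
      rw [show σ⁻¹ (σ x) = x from σ.symm_apply_apply x] at hfy
      exact σ.injective hfy
  unfold m1
  rw [← key, Finset.card_image_of_injective _ σ.injective]

theorem σ_mem_d {p : MPP m} {x : ℕ} (hx : x ∈ p.d) : p.σ x ∈ p.d := by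
  by_contra hc
  have h1 := p.fix _ hc
  have := p.σ.injective h1
  rw [← this] at hx
  exact hc hx

theorem deg2_mul (p q : MPP m) :
    (p * q).d.card + (p * q).m1 ≤ (p.d.card + p.m1) + (q.d.card + q.m1) := by
  have hsub : ((p * q).d \ Finset.range m).filter (fun x => (p * q).σ x = x)
      ⊆ ((p.d \ Finset.range m).filter (fun x => p.σ x = x))
        ∪ ((q.d \ Finset.range m).filter (fun x => q.σ x = x))
        ∪ (p.d ∩ q.d) := by
    rw [Finset.subset_iff]
    intro x (hx : x ∈ ((p * q).d \ Finset.range m).filter (fun x => (p * q).σ x = x))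
    rw [Finset.mem_filter] at hx
    simp only [Finset.mem_filter, Finset.mem_sdiff, mul_d, mul_σ, Finset.mem_union,
      Finset.mem_range, Equiv.Perm.mul_apply, Finset.mem_inter] at hx ⊢
    obtain ⟨⟨hxd, hxm⟩, hfx⟩ := hx
    by_cases hq : q.σ x = x
    · rw [hq] at hfx
      by_cases hxq : x ∈ q.d
      · exact Or.inl (Or.inr ⟨⟨hxq, hxm⟩, hq⟩)
      · have hxp : x ∈ p.d := hxd.resolve_right hxq
        exact Or.inl (Or.inl ⟨⟨hxp, hxm⟩, hfx⟩)
    · have hxq : x ∈ q.d := by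
        by_contra hc; exact hq (q.fix x hc)
      have hyp : q.σ x ∈ p.d := by
        by_contra hc
        exact hq (by rw [← p.fix _ hc, hfx])
      have hxp : x ∈ p.d := by
        have := σ_mem_d (p := p) hyp
        rwa [hfx] at this
      exact Or.inr ⟨hxp, hxq⟩
  have h1 : (p * q).m1 ≤ p.m1 + q.m1 + (p.d ∩ q.d).card := by
    calc (p * q).m1 ≤ _ := Finset.card_le_card hsub
      _ ≤ _ := (Finset.card_union_le _ _).trans
          (Nat.add_le_add_right (Finset.card_union_le _ _) _)
  have h2 : (p * q).d.card + (p.d ∩ q.d).card = p.d.card + q.d.card := by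
    rw [mul_d]; exact Finset.card_union_add_card_inter _ _
  omega

end MPP

/-- deg₂ is a filtration: if k_{λδ}^ρ ≠ 0 then
|ρ| + m₁(ρ) ≤ (|λ| + m₁(λ)) + (|δ| + m₁(δ)). -/
theorem deg2_filtration (m : ℕ) (rl rd r : MPP m)
    (hne : Nat.card {pq : MPP m × MPP m //
        MPP.sameType rl pq.1 ∧ MPP.sameType rd pq.2 ∧ pq.1 * pq.2 = r} ≠ 0) :
    r.d.card + r.m1 ≤ (rl.d.card + rl.m1) + (rd.d.card + rd.m1) := by
  obtain ⟨⟨⟨p, q⟩, h1, h2, h3⟩⟩ := (Nat.card_ne_zero.mp hne).1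
  rw [← h3, MPP.sameType_d_card h1, MPP.sameType_m1 h1,
    MPP.sameType_d_card h2, MPP.sameType_m1 h2]
  exact MPP.deg2_mul p q
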